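/- Let θ > d/2 and t ∈ ℝ. For functions φ, ϕ ∈ L²(ℤ^d × ℝ^d) and ψ : ℤ^d → ℂ with ⟨k⟩^θ ψ ∈ L²(ℤ^d), one has |∑_{k,ℓ∈ℤ^d} ∫_{ℝ^d} φ(k,η) ψ(ℓ) ϕ(k−ℓ, η−ℓt) dη| ≤ C ‖φ‖_{L²_{k,η}} ‖⟨k⟩^θ ψ‖_{L²_k} ‖ϕ‖_{L²_{k,η}}, with C depending only on θ and d. -/

import Mathlib

open MeasureTheory

/-- The bracket `⟨k⟩ = √(1+|k|²)` for `k ∈ ℤ^d`. -/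
noncomputable def brk (d : ℕ) (k : Fin d → ℤ) : ℝ :=
  Real.sqrt (1 + ∑ i, ((k i : ℝ)) ^ 2)

/-- A vector of `ℤ^d` viewed in `ℝ^d`. -/
noncomputable def toE (d : ℕ) (k : Fin d → ℤ) : EuclideanSpace ℝ (Fin d) :=
  WithLp.toLp 2 (fun i => (k i : ℝ))

/-!
Cauchy–Schwarz in `η`, for which the shift by `ℓt` is invisible, bounds each term by
`a(k) |ψ(ℓ)| c(k - ℓ)`, where `a`, `c` are the `L²_η` norms of `φ(k, ·)` and `ϕ(k, ·)`.
By discrete Young and Cauchy–Schwarz in `k` the double sum of these is at most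
`‖a‖_{ℓ²} ‖ψ‖_{ℓ¹} ‖c‖_{ℓ²}`, and `‖ψ‖_{ℓ¹} ≤ (∑ ⟨ℓ⟩^{-2θ})^{1/2} ‖⟨ℓ⟩^θ ψ‖_{ℓ²}`, a finite
constant since `2θ > d`.
-/

open Finset

lemma brk_sq (d : ℕ) (k : Fin d → ℤ) : brk d k ^ 2 = 1 + ∑ i, (k i : ℝ) ^ 2 :=
  Real.sq_sqrt (by positivity)

lemma one_le_brk (d : ℕ) (k : Fin d → ℤ) : 1 ≤ brk d k :=
  Real.one_le_sqrt.2 (le_add_of_nonneg_right (by positivity))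

lemma brk_pos (d : ℕ) (k : Fin d → ℤ) : 0 < brk d k :=
  one_pos.trans_le (one_le_brk d k)

lemma prod_one_add_sq_le_brk_sq_pow (d : ℕ) (k : Fin d → ℤ) :
    ∏ i, (1 + (k i : ℝ) ^ 2) ≤ (brk d k ^ 2) ^ d := by
  calc ∏ i, (1 + (k i : ℝ) ^ 2) ≤ ∏ _i : Fin d, brk d k ^ 2 := by
        refine prod_le_prod (fun _ _ => by positivity) fun i _ => ?_
        rw [brk_sq]
        gcongr
        exact single_le_sum (f := fun j => (k j : ℝ) ^ 2) (fun j _ => sq_nonneg _) (mem_univ i)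
    _ = (brk d k ^ 2) ^ d := by simp

lemma summable_one_add_intCast_sq_rpow_neg {s : ℝ} (hs : 1 / 2 < s) :
    Summable fun n : ℤ => (1 + (n : ℝ) ^ 2) ^ (-s) := by
  refine (Real.summable_abs_int_rpow (b := 2 * s) (by linarith)).of_norm_bounded_eventually ?_
  filter_upwards [Filter.eventually_cofinite_ne 0] with n hn
  rw [Real.norm_of_nonneg (by positivity)]
  calc (1 + (n : ℝ) ^ 2) ^ (-s) ≤ ((n : ℝ) ^ 2) ^ (-s) :=
        Real.rpow_le_rpow_of_nonpos (by positivity) (by linarith) (by linarith)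
    _ = |(n : ℝ)| ^ (-(2 * s)) := by
        rw [← sq_abs, ← Real.rpow_natCast, ← Real.rpow_mul (abs_nonneg _)]
        norm_num

lemma summable_prod_comp_of_nonneg {α : Type*} {g : α → ℝ} (hg0 : 0 ≤ g) (hg : Summable g) :
    ∀ d : ℕ, Summable fun x : Fin d → α => ∏ i, g (x i)
  | 0 => .of_finite
  | d + 1 => by
    rw [← (Fin.consEquiv fun _ => α).summable_iff]
    refine (hg.mul_of_nonneg (summable_prod_comp_of_nonneg hg0 hg d) hg0
      fun x => prod_nonneg fun i _ => hg0 _).congr fun p => ?_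
    simp [Fin.consEquiv, Fin.prod_univ_succ]

/-- The threshold `θ > d/2` enters through `⟨k⟩^{-2θ} ≤ ∏ᵢ (1 + kᵢ²)^{-θ/d}`, a product of
one-dimensional series with exponent `θ/d > 1/2`. -/
theorem summable_brk_rpow_neg {d : ℕ} {θ : ℝ} (hθ : (d : ℝ) / 2 < θ) :
    Summable fun k : Fin d → ℤ => brk d k ^ (-(2 * θ)) := by
  rcases Nat.eq_zero_or_pos d with rfl | hd
  · exact .of_finite
  have hd' : (0 : ℝ) < d := by exact_mod_cast hd
  have hs : 1 / 2 < θ / d := by rw [lt_div_iff₀ hd']; linarith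
  refine (summable_prod_comp_of_nonneg (fun n => by positivity) (summable_one_add_intCast_sq_rpow_neg hs)
    d).of_nonneg_of_le (fun k => Real.rpow_nonneg (brk_pos d k).le _) fun k => ?_
  have hk := brk_pos d k
  calc brk d k ^ (-(2 * θ)) = ((brk d k ^ 2) ^ d) ^ (-(θ / d)) := by
        rw [← Real.rpow_natCast, ← Real.rpow_natCast, ← Real.rpow_mul hk.le,
          ← Real.rpow_mul (by positivity)]
        congr 1
        field_simp
        push_cast
        ring
    _ ≤ (∏ i, (1 + (k i : ℝ) ^ 2)) ^ (-(θ / d)) :=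
        Real.rpow_le_rpow_of_nonpos (by positivity) (prod_one_add_sq_le_brk_sq_pow d k)
          (neg_nonpos.2 (div_nonneg (by linarith) hd'.le))
    _ = ∏ i, (1 + (k i : ℝ) ^ 2) ^ (-(θ / d)) :=
        (Real.finsetProd_rpow _ _ (fun i _ => by positivity) _).symm

section Sums

variable {ι : Type*}

theorem summable_and_tsum_mul_le_sqrt {f g : ι → ℝ} (hf0 : 0 ≤ f) (hg0 : 0 ≤ g)
    (hf : Summable fun i => f i ^ 2) (hg : Summable fun i => g i ^ 2) :
    Summable (fun i => f i * g i) ∧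
      ∑' i, f i * g i ≤ √(∑' i, f i ^ 2) * √(∑' i, g i ^ 2) := by
  simpa [Real.sqrt_eq_rpow] using
    Real.summable_and_inner_le_Lp_mul_Lq_tsum_of_nonneg Real.HolderConjugate.two_two hf0 hg0
      (by simpa using hf) (by simpa using hg)

theorem summable_and_tsum_le_of_summable_rpow_mul_sq {w b : ι → ℝ} (hw : ∀ i, 0 < w i)
    (hb : 0 ≤ b) (θ : ℝ) (hw_sum : Summable fun i => w i ^ (-(2 * θ)))
    (hb_sum : Summable fun i => w i ^ (2 * θ) * b i ^ 2) :
    Summable b ∧ ∑' i, b i ≤ √(∑' i, w i ^ (-(2 * θ))) * √(∑' i, w i ^ (2 * θ) * b i ^ 2) := by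
  have hsplit : ∀ i, w i ^ (-θ) * (w i ^ θ * b i) = b i := fun i => by
    rw [← mul_assoc, ← Real.rpow_add (hw i), neg_add_cancel, Real.rpow_zero, one_mul]
  have hsq : ∀ (i : ι) (r : ℝ), (w i ^ r) ^ 2 = w i ^ (2 * r) := fun i r => by
    rw [← Real.rpow_mul_natCast (hw i).le, Nat.cast_ofNat, mul_comm]
  have hsq_neg : ∀ i, (w i ^ (-θ)) ^ 2 = w i ^ (-(2 * θ)) := fun i => by rw [hsq, mul_neg]
  have hsq_mul : ∀ i, (w i ^ θ * b i) ^ 2 = w i ^ (2 * θ) * b i ^ 2 := fun i => by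
    rw [mul_pow, hsq]
  obtain ⟨hsum, hle⟩ := summable_and_tsum_mul_le_sqrt
    (f := fun i => w i ^ (-θ)) (g := fun i => w i ^ θ * b i)
    (fun i => Real.rpow_nonneg (hw i).le _)
    (fun i => mul_nonneg (Real.rpow_nonneg (hw i).le _) (hb i))
    (hw_sum.congr fun i => (hsq_neg i).symm) (hb_sum.congr fun i => (hsq_mul i).symm)
  simp only [hsplit, hsq_neg, hsq_mul] at hsum hle
  exact ⟨hsum, hle⟩

theorem norm_tsum_tsum_le_tsum {α β E : Type*} [NormedAddCommGroup E] [CompleteSpace E]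
    {F : α → β → E} {G : α × β → ℝ} (hG : Summable G) (hFG : ∀ a b, ‖F a b‖ ≤ G (a, b)) :
    ‖∑' a, ∑' b, F a b‖ ≤ ∑' p, G p := by
  have hF : Summable fun p : α × β => ‖F p.1 p.2‖ :=
    hG.of_nonneg_of_le (fun _ => norm_nonneg _) fun p => hFG p.1 p.2
  rw [← hF.of_norm.tsum_prod]
  exact (norm_tsum_le_tsum_norm hF).trans (hF.tsum_le_tsum (fun p => hFG p.1 p.2) hG)

/-- Discrete Young inequality `‖b * c‖_{ℓ²} ≤ ‖b‖_{ℓ¹} ‖c‖_{ℓ²}`, paired with `a ∈ ℓ²`. -/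
theorem summable_and_tsum_mul_mul_sub_le {G : Type*} [AddGroup G] {a b c : G → ℝ}
    (ha0 : 0 ≤ a) (hb0 : 0 ≤ b) (hc0 : 0 ≤ c) (ha : Summable fun k => a k ^ 2)
    (hb : Summable b) (hc : Summable fun k => c k ^ 2) :
    Summable (fun p : G × G => a p.1 * b p.2 * c (p.1 - p.2)) ∧
      ∑' p : G × G, a p.1 * b p.2 * c (p.1 - p.2) ≤
        √(∑' k, a k ^ 2) * (∑' ℓ, b ℓ) * √(∑' k, c k ^ 2) := by
  set M := √(∑' k, a k ^ 2) * √(∑' k, c k ^ 2)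
  have hrow : ∀ ℓ, Summable (fun k => a k * c (k - ℓ)) ∧ ∑' k, a k * c (k - ℓ) ≤ M := by
    intro ℓ
    have hshift := Equiv.subRight ℓ |>.summable_iff.2 hc
    obtain ⟨hsum, hle⟩ := summable_and_tsum_mul_le_sqrt ha0 (fun k => hc0 (k - ℓ)) ha hshift
    have hshift_eq := (Equiv.subRight ℓ).tsum_eq fun k => c k ^ 2
    simp only [Equiv.subRight_apply] at hshift_eq
    exact ⟨hsum, hle.trans_eq (by rw [hshift_eq])⟩
  set g : G × G → ℝ := fun q => b q.1 * (a q.2 * c (q.2 - q.1))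
  have hrow_le : ∀ ℓ, ∑' k, g (ℓ, k) ≤ b ℓ * M := fun ℓ => by
    show ∑' k, b ℓ * (a k * c (k - ℓ)) ≤ _
    rw [tsum_mul_left]
    exact mul_le_mul_of_nonneg_left (hrow ℓ).2 (hb0 ℓ)
  have hg : Summable g := by
    refine (summable_prod_of_nonneg fun q => ?_).2 ⟨fun ℓ => (hrow ℓ).1.mul_left (b ℓ), ?_⟩
    · exact mul_nonneg (hb0 _) (mul_nonneg (ha0 _) (hc0 _))
    · exact (hb.mul_right M).of_nonneg_of_le (fun ℓ => tsum_nonneg fun k =>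
        mul_nonneg (hb0 _) (mul_nonneg (ha0 _) (hc0 _))) hrow_le
  have hswap : (fun p : G × G => a p.1 * b p.2 * c (p.1 - p.2)) = g ∘ Prod.swap := by
    ext p
    simp only [g, Function.comp, Prod.fst_swap, Prod.snd_swap]
    ring
  refine ⟨hswap ▸ hg.prod_symm, ?_⟩
  calc ∑' p : G × G, a p.1 * b p.2 * c (p.1 - p.2)
      = ∑' q, g q := by rw [hswap]; exact (Equiv.prodComm G G).tsum_eq g
    _ = ∑' ℓ, ∑' k, g (ℓ, k) := hg.tsum_prod
    _ ≤ ∑' ℓ, b ℓ * M := hg.prod.tsum_le_tsum hrow_le (hb.mul_right M)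
    _ = √(∑' k, a k ^ 2) * (∑' ℓ, b ℓ) * √(∑' k, c k ^ 2) := by rw [tsum_mul_right]; ring

end Sums

section Integrals

variable {α 𝕜 : Type*} [RCLike 𝕜] [MeasurableSpace α] {μ : Measure α}

theorem norm_integral_mul_le_sqrt {f g : α → 𝕜} (hf : MemLp f 2 μ) (hg : MemLp g 2 μ) :
    ‖∫ x, f x * g x ∂μ‖ ≤ √(∫ x, ‖f x‖ ^ 2 ∂μ) * √(∫ x, ‖g x‖ ^ 2 ∂μ) := by
  calc ‖∫ x, f x * g x ∂μ‖ ≤ ∫ x, ‖f x‖ * ‖g x‖ ∂μ := by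
        simpa only [norm_mul] using norm_integral_le_integral_norm (fun x => f x * g x)
    _ ≤ _ := by
        simpa [Real.sqrt_eq_rpow] using integral_mul_norm_le_Lp_mul_Lq
          Real.HolderConjugate.two_two (by simpa using hf) (by simpa using hg)

theorem norm_integral_mul_comp_sub_le [AddGroup α] [MeasurableAdd α] [μ.IsAddRightInvariant]
    {f g : α → 𝕜} (hf : MemLp f 2 μ) (hg : MemLp g 2 μ) (v : α) :
    ‖∫ x, f x * g (x - v) ∂μ‖ ≤ √(∫ x, ‖f x‖ ^ 2 ∂μ) * √(∫ x, ‖g x‖ ^ 2 ∂μ) := by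
  have := norm_integral_mul_le_sqrt hf (hg.comp_measurePreserving (measurePreserving_sub_right μ v))
  simp only [Function.comp_def] at this
  rwa [integral_sub_right_eq_self (fun x => ‖g x‖ ^ 2) v] at this

end Integrals

theorem trilinear_estimate_low_high_general (d : ℕ) (θ : ℝ) (hθ : (d : ℝ) / 2 < θ) :
    ∃ C > 0, ∀ (t : ℝ) (φ ϕ : (Fin d → ℤ) → EuclideanSpace ℝ (Fin d) → ℂ)
      (ψ : (Fin d → ℤ) → ℂ),
      (∀ k, MemLp (φ k) 2 volume) → Summable (fun k => ∫ η, ‖φ k η‖ ^ 2) →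
      (∀ k, MemLp (ϕ k) 2 volume) → Summable (fun k => ∫ η, ‖ϕ k η‖ ^ 2) →
      Summable (fun ℓ => brk d ℓ ^ (2 * θ) * ‖ψ ℓ‖ ^ 2) →
      ‖∑' k : Fin d → ℤ, ∑' ℓ : Fin d → ℤ,
          ∫ η, φ k η * ψ ℓ * ϕ (k - ℓ) (η - t • toE d ℓ)‖ ≤
        C * Real.sqrt (∑' k : Fin d → ℤ, ∫ η, ‖φ k η‖ ^ 2) *
          Real.sqrt (∑' ℓ : Fin d → ℤ, brk d ℓ ^ (2 * θ) * ‖ψ ℓ‖ ^ 2) *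
          Real.sqrt (∑' k : Fin d → ℤ, ∫ η, ‖ϕ k η‖ ^ 2) := by
  have hw := summable_brk_rpow_neg hθ
  refine ⟨√(∑' ℓ, brk d ℓ ^ (-(2 * θ))), Real.sqrt_pos.2 (hw.tsum_pos
    (fun ℓ => Real.rpow_nonneg (brk_pos d ℓ).le _) 0 (Real.rpow_pos_of_pos (brk_pos d 0) _)), ?_⟩
  intro t φ ϕ ψ hφ hφ_sum hϕ hϕ_sum hψ_sum
  set a := fun k => √(∫ η, ‖φ k η‖ ^ 2)
  set c := fun k => √(∫ η, ‖ϕ k η‖ ^ 2)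
  have ha_sq : ∀ k, a k ^ 2 = ∫ η, ‖φ k η‖ ^ 2 := fun k => Real.sq_sqrt (by positivity)
  have hc_sq : ∀ k, c k ^ 2 = ∫ η, ‖ϕ k η‖ ^ 2 := fun k => Real.sq_sqrt (by positivity)
  obtain ⟨hψ, hψ_le⟩ := summable_and_tsum_le_of_summable_rpow_mul_sq (brk_pos d)
    (fun ℓ => norm_nonneg (ψ ℓ)) θ hw hψ_sum
  obtain ⟨hG, hG_le⟩ := summable_and_tsum_mul_mul_sub_le (fun k => Real.sqrt_nonneg _)
    (fun ℓ => norm_nonneg (ψ ℓ)) (fun k => Real.sqrt_nonneg _)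
    (hφ_sum.congr fun k => (ha_sq k).symm) hψ (hϕ_sum.congr fun k => (hc_sq k).symm)
  have hpoint : ∀ k ℓ, ‖∫ η, φ k η * ψ ℓ * ϕ (k - ℓ) (η - t • toE d ℓ)‖ ≤
      a k * ‖ψ ℓ‖ * c (k - ℓ) := fun k ℓ => by
    simp_rw [mul_right_comm _ (ψ ℓ), integral_mul_const, norm_mul]
    rw [mul_right_comm]
    exact mul_le_mul_of_nonneg_right
      (norm_integral_mul_comp_sub_le (hφ k) (hϕ (k - ℓ)) _) (norm_nonneg _)
  rw [tsum_congr ha_sq, tsum_congr hc_sq] at hG_le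
  calc _ ≤ _ := norm_tsum_tsum_le_tsum hG hpoint
    _ ≤ _ := hG_le
    _ ≤ √(∑' k, ∫ η, ‖φ k η‖ ^ 2) * (√(∑' ℓ, brk d ℓ ^ (-(2 * θ))) *
          √(∑' ℓ, brk d ℓ ^ (2 * θ) * ‖ψ ℓ‖ ^ 2)) * √(∑' k, ∫ η, ‖ϕ k η‖ ^ 2) := by gcongr
    _ = _ := by ring

/-- Trilinear estimate (Lemma 3.1 a) in [BMM13]): for `θ > d/2`,
`|∑_{k,ℓ} ∫ φ(k,η) ψ(ℓ) ϕ(k−ℓ, η−ℓt) dη| ≤ C ‖φ‖_{L²} ‖⟨k⟩^θ ψ‖_{L²} ‖ϕ‖_{L²}`. -/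
theorem trilinear_estimate_low_high (d : ℕ) (hd : 1 ≤ d) (θ : ℝ) (hθ : (d : ℝ) / 2 < θ) :
    ∃ C > 0, ∀ (t : ℝ) (φ ϕ : (Fin d → ℤ) → EuclideanSpace ℝ (Fin d) → ℂ)
      (ψ : (Fin d → ℤ) → ℂ),
      (∀ k, MemLp (φ k) 2 volume) → Summable (fun k => ∫ η, ‖φ k η‖ ^ 2) →
      (∀ k, MemLp (ϕ k) 2 volume) → Summable (fun k => ∫ η, ‖ϕ k η‖ ^ 2) →
      Summable (fun ℓ => brk d ℓ ^ (2 * θ) * ‖ψ ℓ‖ ^ 2) →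
      ‖∑' k : Fin d → ℤ, ∑' ℓ : Fin d → ℤ,
          ∫ η, φ k η * ψ ℓ * ϕ (k - ℓ) (η - t • toE d ℓ)‖ ≤
        C * Real.sqrt (∑' k : Fin d → ℤ, ∫ η, ‖φ k η‖ ^ 2) *
          Real.sqrt (∑' ℓ : Fin d → ℤ, brk d ℓ ^ (2 * θ) * ‖ψ ℓ‖ ^ 2) *
          Real.sqrt (∑' k : Fin d → ℤ, ∫ η, ‖ϕ k η‖ ^ 2) :=
  trilinear_estimate_low_high_general d θ hθ
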